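/- Let 0 ≤ p < 1 and q ≥ 1 be real numbers, let a ∈ ℤ^n, and define P(x,y) = |a^T(x − y)|^q + Σ_{j=1}^n |x_j + y_j − 1|^q + (1/2) Σ_{j=1}^n (|x_j|^p + |y_j|^p) for x, y ∈ ℝ^n. Then there exists a subset S ⊆ {1,…,n} with Σ_{i∈S} a_i = Σ_{i∉S} a_i if and only if the infimum of P over ℝ^n × ℝ^n equals n·c(p,q), where c(p,q) = min_{z∈ℝ} (|1−z|^q + (1/2)|z|^p); moreover when such a partition exists this infimum is attained. -/

import Mathlib

/-- `|z|^p` with the paper's convention `z^0 = 0` for `z = 0` and `z^0 = 1` for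
`z ≠ 0` (for `p > 0` this is just `|z|^p`). -/
noncomputable def absPow (p z : ℝ) : ℝ := if z = 0 then 0 else |z| ^ p

/-- The objective of the partition reduction:
`P(x,y) = |aᵀ(x−y)|^q + Σ_j |x_j + y_j − 1|^q + (1/2) Σ_j (|x_j|^p + |y_j|^p)`. -/
noncomputable def Ppart (n : ℕ) (p q : ℝ) (a : Fin n → ℤ) (x y : Fin n → ℝ) : ℝ :=
  |∑ j, (a j : ℝ) * (x j - y j)| ^ q + ∑ j, |x j + y j - 1| ^ q +
    (1 / 2) * ∑ j, (absPow p (x j) + absPow p (y j))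

/-!
Write `g z = |1 - z| ^ q + |z| ^ p / 2` and `c = min g`. As `|·| ^ p` is subadditive for
`0 ≤ p ≤ 1`, the `j`-th pair contributes
`|x_j + y_j - 1| ^ q + (|x_j| ^ p + |y_j| ^ p) / 2 ≥ g (x_j + y_j) ≥ c`,
so `P ≥ n c`, with equality at `x = z₀ 1_S`, `y = z₀ 1_Sᶜ` for a minimiser `z₀` and a
partition `S`.

Conversely, for `p > 0` the objective is continuous and coercive, so it attains `n c`. Equality
forces every pair to be `(z₀, 0)` or `(0, z₀)`, by strict subadditivity and because `g` has a
unique minimiser, and then `aᵀ(x - y) = 0` says that the support of `x` is an equitable partition.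
For `p = 0` we have `c = 1 / 2`, and nothing is attained: but a point with value close to `n / 2`
has exactly one nonzero entry in each pair, so `aᵀ(x - y)` is close to the nonzero integer
`∑_S a - ∑_Sᶜ a`, which keeps the value a fixed distance above `n / 2`.
-/
open Real Set Filter

section absPow

variable {p : ℝ}

lemma absPow_nonneg (p z : ℝ) : 0 ≤ absPow p z := by
  unfold absPow; split_ifs
  exacts [le_rfl, rpow_nonneg (abs_nonneg z) p]

@[simp] lemma absPow_zero (p : ℝ) : absPow p 0 = 0 := if_pos rfl

lemma absPow_one (p : ℝ) : absPow p 1 = 1 := by simp [absPow]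

lemma absPow_zero_exponent {z : ℝ} (hz : z ≠ 0) : absPow 0 z = 1 := by
  simp [absPow, hz]

lemma absPow_zero_exponent_le_one (z : ℝ) : absPow 0 z ≤ 1 := by
  unfold absPow; split_ifs <;> simp

lemma absPow_of_pos (hp : 0 < p) (z : ℝ) : absPow p z = |z| ^ p := by
  unfold absPow; split_ifs with hz
  · rw [hz, abs_zero, zero_rpow hp.ne']
  · rfl

lemma rpow_add_lt_add_rpow {s t : ℝ} (hs : 0 < s) (ht : 0 < t) (hp1 : p < 1) :
    (s + t) ^ p < s ^ p + t ^ p := by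
  have hst : 0 < s + t := add_pos hs ht
  have key : ∀ r, 0 < r → r < s + t → r * (s + t) ^ (p - 1) < r ^ p := fun r hr hrst => by
    calc r * (s + t) ^ (p - 1) < r * r ^ (p - 1) :=
          mul_lt_mul_of_pos_left (rpow_lt_rpow_of_neg hr hrst (by linarith)) hr
      _ = r ^ p := by rw [rpow_sub_one hr.ne', mul_div_cancel₀ _ hr.ne']
  calc (s + t) ^ p = s * (s + t) ^ (p - 1) + t * (s + t) ^ (p - 1) := by
        rw [← add_mul, rpow_sub_one hst.ne', mul_div_cancel₀ _ hst.ne']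
    _ < s ^ p + t ^ p := add_lt_add (key s hs (by linarith)) (key t ht (by linarith))

lemma absPow_add_le (hp0 : 0 ≤ p) (hp1 : p ≤ 1) (u v : ℝ) :
    absPow p (u + v) ≤ absPow p u + absPow p v := by
  rcases hp0.eq_or_lt with rfl | hp
  · by_cases hu : u = 0
    · simp [hu]
    · rw [absPow_zero_exponent hu]
      linarith [absPow_nonneg 0 v, absPow_zero_exponent_le_one (u + v)]
  · simp only [absPow_of_pos hp]
    calc |u + v| ^ p ≤ (|u| + |v|) ^ p := rpow_le_rpow (abs_nonneg _) (abs_add_le u v) hp.le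
      _ ≤ |u| ^ p + |v| ^ p := rpow_add_le_add_rpow (abs_nonneg u) (abs_nonneg v) hp.le hp1

lemma absPow_add_lt (hp0 : 0 ≤ p) (hp1 : p < 1) {u v : ℝ} (hu : u ≠ 0) (hv : v ≠ 0) :
    absPow p (u + v) < absPow p u + absPow p v := by
  rcases hp0.eq_or_lt with rfl | hp
  · rw [absPow_zero_exponent hu, absPow_zero_exponent hv]
    linarith [absPow_zero_exponent_le_one (u + v)]
  · simp only [absPow_of_pos hp]
    calc |u + v| ^ p ≤ (|u| + |v|) ^ p := rpow_le_rpow (abs_nonneg _) (abs_add_le u v) hp.le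
      _ < |u| ^ p + |v| ^ p := rpow_add_lt_add_rpow (abs_pos.2 hu) (abs_pos.2 hv) hp1

end absPow

noncomputable def scalarObj (p q : ℝ) : ℝ → ℝ := fun z => |1 - z| ^ q + (1 / 2) * absPow p z

section scalarObj

variable {p q c : ℝ}

lemma scalarObj_one (hq : q ≠ 0) : scalarObj p q 1 = 1 / 2 := by
  simp [scalarObj, absPow_one, zero_rpow hq]

lemma one_le_scalarObj_of_nonpos (hq : 0 ≤ q) {z : ℝ} (hz : z ≤ 0) :
    1 ≤ scalarObj p q z := by
  have : 1 ≤ |1 - z| ^ q := one_le_rpow (by rw [abs_of_pos (by linarith)]; linarith) hq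
  unfold scalarObj; linarith [absPow_nonneg p z]

lemma half_lt_scalarObj_of_one_lt (hp : 0 < p) {z : ℝ} (hz : 1 < z) :
    1 / 2 < scalarObj p q z := by
  have : 1 < |z| ^ p := one_lt_rpow (by rw [abs_of_pos (by linarith)]; exact hz) hp
  unfold scalarObj; rw [absPow_of_pos hp]; linarith [rpow_nonneg (abs_nonneg (1 - z)) q]

lemma le_half_of_isLeast (hq : q ≠ 0) (hc : IsLeast (range (scalarObj p q)) c) : c ≤ 1 / 2 :=
  scalarObj_one hq ▸ hc.2 ⟨1, rfl⟩

lemma pos_of_scalarObj_eq (hq : 1 ≤ q) (hc : IsLeast (range (scalarObj p q)) c) {z : ℝ}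
    (hz : scalarObj p q z = c) : 0 < z := by
  by_contra! hz0
  linarith [one_le_scalarObj_of_nonpos (p := p) (q := q) (by linarith) hz0,
    le_half_of_isLeast (by linarith) hc]

lemma le_one_of_scalarObj_eq (hp : 0 < p) (hq : 1 ≤ q) (hc : IsLeast (range (scalarObj p q)) c)
    {z : ℝ} (hz : scalarObj p q z = c) : z ≤ 1 := by
  by_contra! hz1
  linarith [half_lt_scalarObj_of_one_lt (q := q) hp hz1, le_half_of_isLeast (by linarith) hc]

lemma eq_half_of_isLeast_scalarObj_zero (hq : 1 ≤ q) (hc : IsLeast (range (scalarObj 0 q)) c) :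
    c = 1 / 2 := by
  refine le_antisymm (le_half_of_isLeast (by linarith) hc) ?_
  obtain ⟨z, rfl⟩ := hc.1
  have hz := pos_of_scalarObj_eq hq hc rfl
  simp only [scalarObj, absPow_zero_exponent hz.ne']
  linarith [rpow_nonneg (abs_nonneg (1 - z)) q]

lemma continuous_scalarObj (hp : 0 < p) (hq : 0 ≤ q) : Continuous (scalarObj p q) := by
  have : scalarObj p q = fun z => |1 - z| ^ q + (1 / 2) * |z| ^ p := by
    funext z; simp only [scalarObj, absPow_of_pos hp]
  rw [this]
  exact ((continuous_rpow_const hq).comp (continuous_const.sub continuous_id).abs).add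
    (continuous_const.mul ((continuous_rpow_const hp.le).comp continuous_abs))

noncomputable def scalarObjDeriv (p q z : ℝ) : ℝ :=
  (1 / 2) * (p * z ^ (p - 1)) - q * (1 - z) ^ (q - 1)

lemma hasDerivAt_scalarObj (hp : 0 < p) {z : ℝ} (hz0 : 0 < z) (hz1 : z < 1) :
    HasDerivAt (scalarObj p q) (scalarObjDeriv p q z) z := by
  have hz1' : 1 - z ≠ 0 := (sub_pos.2 hz1).ne'
  have hsmooth :
      HasDerivAt (fun w => (1 - w) ^ q + (1 / 2) * w ^ p) (scalarObjDeriv p q z) z := by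
    have h := (((hasDerivAt_id' z).const_sub 1).rpow_const (p := q) (Or.inl hz1')).add
      ((hasDerivAt_rpow_const (p := p) (Or.inl hz0.ne')).const_mul (1 / 2 : ℝ))
    exact h.congr_deriv (by rw [scalarObjDeriv]; ring)
  refine hsmooth.congr_of_eventuallyEq ?_
  filter_upwards [Ioo_mem_nhds hz0 hz1] with w hw
  simp only [scalarObj, absPow_of_pos hp, abs_of_pos hw.1, abs_of_pos (sub_pos.2 hw.2)]

/-- `log` of the ratio of the two terms of `scalarObjDeriv`: it has the sign of the derivative
and, unlike the derivative, is strictly convex on `(0, 1)`. -/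
noncomputable def derivLogRatio (p q z : ℝ) : ℝ :=
  log ((1 / 2) * (p * z ^ (p - 1))) - log (q * (1 - z) ^ (q - 1))

lemma derivLogRatio_eq_zero {z : ℝ} (h : scalarObjDeriv p q z = 0) :
    derivLogRatio p q z = 0 := by
  rw [derivLogRatio, sub_eq_zero.1 h, sub_self]

lemma scalarObjDeriv_neg (hp : 0 < p) (hq : 0 < q) {z : ℝ} (hz0 : 0 < z) (hz1 : z < 1)
    (h : derivLogRatio p q z < 0) : scalarObjDeriv p q z < 0 := by
  have hz1' : 0 < 1 - z := sub_pos.2 hz1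
  rw [derivLogRatio, sub_neg, log_lt_log_iff (by positivity) (by positivity)] at h
  exact sub_neg.2 h

end scalarObj

section uniqueness

variable {p q c : ℝ}

lemma strictConvexOn_derivLogRatio (hp : 0 < p) (hp1 : p < 1) (hq : 1 ≤ q) :
    StrictConvexOn ℝ (Ioo 0 1) (derivLogRatio p q) := by
  have hexpand : EqOn (fun z => log (p / 2) - log q + ((p - 1) * log z - (q - 1) * log (1 - z)))
      (derivLogRatio p q) (Ioo 0 1) := by
    rintro z ⟨hz0, hz1⟩
    have hz1' : 0 < 1 - z := sub_pos.2 hz1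
    rw [derivLogRatio, show (1 / 2) * (p * z ^ (p - 1)) = p / 2 * z ^ (p - 1) by ring,
      log_mul (by positivity) (by positivity), log_mul (by positivity) (by positivity),
      log_rpow hz0, log_rpow hz1']
    ring
  refine StrictConvexOn.congr ⟨convex_Ioo 0 1, ?_⟩ hexpand
  rintro x ⟨hx0, hx1⟩ y ⟨hy0, hy1⟩ hxy a b ha hb hab
  have hlog : a * log x + b * log y < log (a * x + b * y) := by
    simpa using strictConcaveOn_log_Ioi.2 hx0 hy0 hxy ha hb hab
  have hlog' : a * log (1 - x) + b * log (1 - y) ≤ log (1 - (a * x + b * y)) := by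
    have := strictConcaveOn_log_Ioi.concaveOn.2 (sub_pos.2 hx1) (sub_pos.2 hy1) ha.le hb.le hab
    rwa [show a • (1 - x) + b • (1 - y) = 1 - (a * x + b * y) by
      simp only [smul_eq_mul]; linear_combination hab] at this
  have e1 := mul_lt_mul_of_neg_left hlog (sub_neg.2 hp1)
  have e2 := mul_le_mul_of_nonneg_left hlog' (sub_nonneg.2 hq)
  simp only [smul_eq_mul]
  linear_combination e1 + e2 + (log q - log (p / 2)) * hab

lemma not_lt_of_scalarObj_eq (hp : 0 < p) (hp1 : p < 1) (hq : 1 ≤ q)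
    (hc : IsLeast (range (scalarObj p q)) c) {z₁ z₂ : ℝ}
    (h₁ : scalarObj p q z₁ = c) (h₂ : scalarObj p q z₂ = c) : ¬ z₁ < z₂ := by
  intro h12
  have hz₁ : 0 < z₁ := pos_of_scalarObj_eq hq hc h₁
  have hz₂ : z₂ ≤ 1 := le_one_of_scalarObj_eq hp hq hc h₂
  have hderiv : ∀ w ∈ Ioo z₁ z₂, HasDerivAt (scalarObj p q) (scalarObjDeriv p q w) w :=
    fun w hw => hasDerivAt_scalarObj hp (hz₁.trans hw.1) (hw.2.trans_le hz₂)
  have hcont := (continuous_scalarObj (q := q) hp (by linarith)).continuousOn (s := Icc z₁ z₂)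
  have hmin : IsLocalMin (scalarObj p q) z₁ :=
    Eventually.of_forall fun w => h₁ ▸ hc.2 ⟨w, rfl⟩
  have hL₁ : derivLogRatio p q z₁ = 0 := derivLogRatio_eq_zero
    (hmin.hasDerivAt_eq_zero (hasDerivAt_scalarObj hp hz₁ (h12.trans_le hz₂)))
  -- Rolle gives a second critical point `u`; strict convexity makes `derivLogRatio`, hence the
  -- derivative, negative between `z₁` and `u`, so `scalarObj` would drop below its minimum.
  obtain ⟨u, hu, hu'⟩ := exists_hasDerivAt_eq_zero h12 hcont (h₁.trans h₂.symm) hderiv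
  have hLu : derivLogRatio p q u = 0 := derivLogRatio_eq_zero hu'
  obtain ⟨ξ, hξ, hslope⟩ := exists_hasDerivAt_eq_slope (scalarObj p q) (scalarObjDeriv p q)
    hu.1 (hcont.mono (Icc_subset_Icc le_rfl hu.2.le))
    (fun w hw => hderiv w ⟨hw.1, hw.2.trans hu.2⟩)
  have hLξ : derivLogRatio p q ξ < 0 := by
    have := (strictConvexOn_derivLogRatio hp hp1 hq).lt_on_openSegment
      ⟨hz₁, h12.trans_le hz₂⟩ ⟨hz₁.trans hu.1, hu.2.trans_le hz₂⟩ hu.1.ne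
      (by rw [openSegment_eq_Ioo hu.1]; exact hξ)
    rwa [hL₁, hLu, max_self] at this
  have hneg := scalarObjDeriv_neg hp (by linarith) (hz₁.trans hξ.1)
    ((hξ.2.trans hu.2).trans_le hz₂) hLξ
  rw [hslope, div_neg_iff] at hneg
  have hge : c ≤ scalarObj p q u := hc.2 ⟨u, rfl⟩
  rcases hneg with ⟨_, h⟩ | ⟨h, _⟩
  · linarith [hu.1]
  · linarith

lemma scalarObj_minimizer_unique (hp : 0 < p) (hp1 : p < 1) (hq : 1 ≤ q)
    (hc : IsLeast (range (scalarObj p q)) c) {z₁ z₂ : ℝ}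
    (h₁ : scalarObj p q z₁ = c) (h₂ : scalarObj p q z₂ = c) : z₁ = z₂ :=
  le_antisymm (not_lt.1 (not_lt_of_scalarObj_eq hp hp1 hq hc h₂ h₁))
    (not_lt.1 (not_lt_of_scalarObj_eq hp hp1 hq hc h₁ h₂))

end uniqueness

noncomputable def pairCost (p q u v : ℝ) : ℝ :=
  |u + v - 1| ^ q + (1 / 2) * (absPow p u + absPow p v)

section Ppart

variable {n : ℕ} {p q c : ℝ} {a : Fin n → ℤ}

lemma Ppart_eq_add_sum_pairCost (x y : Fin n → ℝ) :
    Ppart n p q a x y =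
      |∑ j, (a j : ℝ) * (x j - y j)| ^ q + ∑ j, pairCost p q (x j) (y j) := by
  simp only [Ppart, pairCost, Finset.sum_add_distrib, ← Finset.mul_sum]
  ring

lemma pairCost_zero_right (u : ℝ) : pairCost p q u 0 = scalarObj p q u := by
  simp [pairCost, scalarObj, abs_sub_comm]

lemma pairCost_zero_left (v : ℝ) : pairCost p q 0 v = scalarObj p q v := by
  simp [pairCost, scalarObj, abs_sub_comm]

lemma scalarObj_add_le_pairCost (hp0 : 0 ≤ p) (hp1 : p ≤ 1) (u v : ℝ) :
    scalarObj p q (u + v) ≤ pairCost p q u v := by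
  simp only [scalarObj, pairCost, abs_sub_comm (u + v)]
  linarith [absPow_add_le hp0 hp1 u v]

lemma le_pairCost (hp0 : 0 ≤ p) (hp1 : p ≤ 1) (hc : IsLeast (range (scalarObj p q)) c)
    (u v : ℝ) : c ≤ pairCost p q u v :=
  (hc.2 ⟨u + v, rfl⟩).trans (scalarObj_add_le_pairCost hp0 hp1 u v)

lemma mul_le_sum_pairCost (hp0 : 0 ≤ p) (hp1 : p ≤ 1) (hc : IsLeast (range (scalarObj p q)) c)
    (x y : Fin n → ℝ) : (n : ℝ) * c ≤ ∑ j, pairCost p q (x j) (y j) := by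
  simpa using
    Finset.card_nsmul_le_sum Finset.univ _ c fun j _ => le_pairCost hp0 hp1 hc (x j) (y j)

lemma mul_le_Ppart (hp0 : 0 ≤ p) (hp1 : p ≤ 1) (hc : IsLeast (range (scalarObj p q)) c)
    (x y : Fin n → ℝ) : (n : ℝ) * c ≤ Ppart n p q a x y := by
  rw [Ppart_eq_add_sum_pairCost]
  linarith [mul_le_sum_pairCost hp0 hp1 hc x y,
    rpow_nonneg (abs_nonneg (∑ j, (a j : ℝ) * (x j - y j))) q]

lemma sum_mul_ite_neg (S : Finset (Fin n)) (b : Fin n → ℝ) (z : ℝ) :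
    ∑ j, b j * (if j ∈ S then z else -z) = z * (∑ j ∈ S, b j - ∑ j ∈ Sᶜ, b j) := by
  rw [← Finset.sum_add_sum_compl S, mul_sub, Finset.mul_sum, Finset.mul_sum, sub_eq_add_neg,
    ← Finset.sum_neg_distrib]
  congr 1 <;> refine Finset.sum_congr rfl fun j hj => ?_
  · rw [if_pos hj]; ring
  · rw [if_neg (Finset.mem_compl.1 hj)]; ring

lemma Ppart_ite_of_partition (hq : q ≠ 0) {S : Finset (Fin n)}
    (hS : ∑ i ∈ S, a i = ∑ i ∈ Sᶜ, a i) (z : ℝ) :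
    Ppart n p q a (fun j => if j ∈ S then z else 0) (fun j => if j ∈ S then 0 else z) =
      n * scalarObj p q z := by
  have hdiff : ∀ j, ((if j ∈ S then z else 0) - if j ∈ S then 0 else z) =
      if j ∈ S then z else -z := fun j => by split_ifs <;> ring
  have hcost : ∀ j, pairCost p q (if j ∈ S then z else 0) (if j ∈ S then 0 else z) =
      scalarObj p q z := fun j => by
    split_ifs
    exacts [pairCost_zero_right z, pairCost_zero_left z]
  have hS' : ∑ i ∈ S, (a i : ℝ) = ∑ i ∈ Sᶜ, (a i : ℝ) := by exact_mod_cast hS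
  simp only [Ppart_eq_add_sum_pairCost, hdiff, hcost, sum_mul_ite_neg, hS', sub_self, mul_zero,
    abs_zero, zero_rpow hq, Finset.sum_const, Finset.card_univ, Fintype.card_fin, nsmul_eq_mul,
    zero_add]

lemma pairCost_eq_cases (hp : 0 < p) (hp1 : p < 1) (hq : 1 ≤ q)
    (hc : IsLeast (range (scalarObj p q)) c) {z₀ : ℝ} (hz₀ : scalarObj p q z₀ = c)
    {u v : ℝ} (h : pairCost p q u v = c) : (u = z₀ ∧ v = 0) ∨ (u = 0 ∧ v = z₀) := by
  have hle := scalarObj_add_le_pairCost (q := q) hp.le hp1.le u v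
  have hsum : scalarObj p q (u + v) = c := le_antisymm (h ▸ hle) (hc.2 ⟨u + v, rfl⟩)
  have huv : u + v = z₀ := scalarObj_minimizer_unique hp hp1 hq hc hsum hz₀
  have hsplit : u = 0 ∨ v = 0 := by
    by_contra! hne
    have := absPow_add_lt hp.le hp1 hne.1 hne.2
    simp only [scalarObj, pairCost, abs_sub_comm (u + v)] at hsum h
    linarith
  rcases hsplit with rfl | rfl
  · exact Or.inr ⟨rfl, by simpa using huv⟩
  · exact Or.inl ⟨by simpa using huv, rfl⟩

lemma exists_partition_of_Ppart_eq (hp : 0 < p) (hp1 : p < 1) (hq : 1 ≤ q)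
    (hc : IsLeast (range (scalarObj p q)) c) {x y : Fin n → ℝ}
    (h : Ppart n p q a x y = n * c) :
    ∃ S : Finset (Fin n), ∑ i ∈ S, a i = ∑ i ∈ Sᶜ, a i := by
  classical
  obtain ⟨z₀, hz₀⟩ := hc.1
  have hz₀pos : 0 < z₀ := pos_of_scalarObj_eq hq hc hz₀
  rw [Ppart_eq_add_sum_pairCost] at h
  have hsum := mul_le_sum_pairCost hp.le hp1.le hc x y
  have hD : |∑ j, (a j : ℝ) * (x j - y j)| ^ q = 0 :=
    le_antisymm (by linarith) (rpow_nonneg (abs_nonneg _) q)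
  have hcost : ∀ j, pairCost p q (x j) (y j) = c := by
    have := (Finset.sum_eq_sum_iff_of_le (s := Finset.univ)
      fun j _ => le_pairCost hp.le hp1.le hc (x j) (y j)).1
      (by simp only [Finset.sum_const, Finset.card_univ, Fintype.card_fin, nsmul_eq_mul]; linarith)
    exact fun j => (this j (Finset.mem_univ j)).symm
  set S : Finset (Fin n) := Finset.univ.filter fun j => y j = 0
  have hdiff : ∀ j, x j - y j = if j ∈ S then z₀ else -z₀ := by
    intro j
    rcases pairCost_eq_cases hp hp1 hq hc hz₀ (hcost j) with ⟨hx, hy⟩ | ⟨hx, hy⟩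
    · simp [S, hx, hy]
    · simp [S, hx, hy, hz₀pos.ne']
  refine ⟨S, ?_⟩
  rw [rpow_eq_zero (abs_nonneg _) (by linarith), abs_eq_zero] at hD
  simp only [hdiff, sum_mul_ite_neg, mul_eq_zero, hz₀pos.ne', false_or, sub_eq_zero] at hD
  exact_mod_cast hD

end Ppart

section existence

variable {n : ℕ} {p q : ℝ} {a : Fin n → ℤ}

lemma absPow_le_two_mul_Ppart (x y : Fin n → ℝ) (j : Fin n) :
    absPow p (x j) + absPow p (y j) ≤ 2 * Ppart n p q a x y := by
  have hj := Finset.single_le_sum (f := fun i => absPow p (x i) + absPow p (y i))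
    (fun i _ => add_nonneg (absPow_nonneg p (x i)) (absPow_nonneg p (y i))) (Finset.mem_univ j)
  have hcost : 0 ≤ ∑ i, |x i + y i - 1| ^ q :=
    Finset.sum_nonneg fun i _ => rpow_nonneg (abs_nonneg _) q
  unfold Ppart
  linarith [rpow_nonneg (abs_nonneg (∑ j, (a j : ℝ) * (x j - y j))) q]

lemma Ppart_nonneg (x y : Fin n → ℝ) : 0 ≤ Ppart n p q a x y := by
  unfold Ppart
  have := Finset.sum_nonneg fun i (_ : i ∈ Finset.univ) =>
    add_nonneg (absPow_nonneg p (x i)) (absPow_nonneg p (y i))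
  have := Finset.sum_nonneg fun i (_ : i ∈ Finset.univ) =>
    rpow_nonneg (abs_nonneg (x i + y i - 1)) q
  linarith [rpow_nonneg (abs_nonneg (∑ j, (a j : ℝ) * (x j - y j))) q]

lemma rpow_norm_le_two_mul_Ppart (hp : 0 < p) (w : (Fin n → ℝ) × (Fin n → ℝ)) :
    ‖w‖ ^ p ≤ 2 * Ppart n p q a w.1 w.2 := by
  set M := 2 * Ppart n p q a w.1 w.2
  have hM : 0 ≤ M := by linarith [Ppart_nonneg (p := p) (q := q) (a := a) w.1 w.2]
  have hcoord : ∀ t, absPow p t ≤ M → ‖t‖ ≤ M ^ p⁻¹ := fun t ht =>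
    (le_rpow_inv_iff_of_pos (norm_nonneg t) hM hp).2 (by rwa [norm_eq_abs, ← absPow_of_pos hp])
  have hinv : 0 ≤ M ^ p⁻¹ := rpow_nonneg hM _
  refine (le_rpow_inv_iff_of_pos (norm_nonneg w) hM hp).1 <|
    max_le ((pi_norm_le_iff_of_nonneg hinv).2 fun j => hcoord _ ?_)
      ((pi_norm_le_iff_of_nonneg hinv).2 fun j => hcoord _ ?_)
  · linarith [absPow_le_two_mul_Ppart (p := p) (q := q) (a := a) w.1 w.2 j,
      absPow_nonneg p (w.2 j)]
  · linarith [absPow_le_two_mul_Ppart (p := p) (q := q) (a := a) w.1 w.2 j,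
      absPow_nonneg p (w.1 j)]

lemma continuous_Ppart (hp : 0 < p) (hq : 0 ≤ q) :
    Continuous fun w : (Fin n → ℝ) × (Fin n → ℝ) => Ppart n p q a w.1 w.2 := by
  have hp0 := hp.le
  simp only [Ppart, absPow_of_pos hp]
  fun_prop (disch := assumption)

lemma exists_forall_Ppart_le (hp : 0 < p) (hq : 0 ≤ q) :
    ∃ w : (Fin n → ℝ) × (Fin n → ℝ), ∀ v : (Fin n → ℝ) × (Fin n → ℝ),
      Ppart n p q a w.1 w.2 ≤ Ppart n p q a v.1 v.2 :=
  (continuous_Ppart hp hq).exists_forall_le <| tendsto_atTop_mono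
    (fun w => by
      simp only [Function.comp_apply]
      linarith [rpow_norm_le_two_mul_Ppart (q := q) (a := a) hp w])
    (((tendsto_rpow_atTop hp).comp tendsto_norm_cocompact_atTop).const_mul_atTop
      (by norm_num : (0 : ℝ) < 1 / 2))

end existence

section zeroExponent

variable {n : ℕ} {q : ℝ} {a : Fin n → ℤ}

lemma one_le_pairCost_zero_of_iff {u v : ℝ} (h : u = 0 ↔ v = 0) :
    1 ≤ pairCost 0 q u v := by
  have hcost := rpow_nonneg (abs_nonneg (u + v - 1)) q
  by_cases hu : u = 0
  · simp [pairCost, hu, h.1 hu]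
  · simp only [pairCost, absPow_zero_exponent hu, absPow_zero_exponent (mt h.2 hu)]
    linarith

lemma pairCost_zero_of_not_iff {u v : ℝ} (h : ¬(u = 0 ↔ v = 0)) :
    pairCost 0 q u v = |u + v - 1| ^ q + 1 / 2 := by
  by_cases hu : u = 0
  · simp [pairCost, hu, absPow_zero_exponent (show v ≠ 0 by tauto)]
  · simp [pairCost, absPow_zero_exponent hu, show v = 0 by tauto]

lemma half_le_pairCost_zero (u v : ℝ) : 1 / 2 ≤ pairCost 0 q u v := by
  by_cases h : u = 0 ↔ v = 0
  · linarith [one_le_pairCost_zero_of_iff (q := q) h]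
  · rw [pairCost_zero_of_not_iff h]
    linarith [rpow_nonneg (abs_nonneg (u + v - 1)) q]

lemma mul_add_le_sum {θ : Fin n → ℝ} {c δ : ℝ} (hlb : ∀ i, c ≤ θ i) {j : Fin n}
    (hj : c + δ ≤ θ j) : n * c + δ ≤ ∑ i, θ i := by
  have h := Finset.single_le_sum (f := fun i => θ i - c) (fun i _ => sub_nonneg.2 (hlb i))
    (Finset.mem_univ j)
  simp only [Finset.sum_sub_distrib, Finset.sum_const, Finset.card_univ, Fintype.card_fin,
    nsmul_eq_mul] at h
  linarith

lemma one_le_abs_sum_add_sum {S : Finset (Fin n)} (hS : ∑ i ∈ S, a i ≠ ∑ i ∈ Sᶜ, a i)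
    (r : Fin n → ℝ) :
    1 ≤ |∑ j, (a j : ℝ) * ((if j ∈ S then 1 else -1) * (1 + r j))| +
      ∑ j, |(a j : ℝ)| * |r j| := by
  set s : Fin n → ℝ := fun j => if j ∈ S then 1 else -1
  have hK : 1 ≤ |∑ j, (a j : ℝ) * s j| := by
    rw [sum_mul_ite_neg, one_mul]
    exact_mod_cast Int.one_le_abs (sub_ne_zero.2 hS)
  have hsplit : ∑ j, (a j : ℝ) * (s j * (1 + r j)) =
      ∑ j, (a j : ℝ) * s j + ∑ j, (a j : ℝ) * (s j * r j) := by
    rw [← Finset.sum_add_distrib]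
    exact Finset.sum_congr rfl fun j _ => by ring
  have herr : |∑ j, (a j : ℝ) * (s j * r j)| ≤ ∑ j, |(a j : ℝ)| * |r j| :=
    (Finset.abs_sum_le_sum_abs _ _).trans_eq <| Finset.sum_congr rfl fun j _ => by
      simp only [s]; split_ifs <;> simp [abs_mul]
  have htri := abs_sub (∑ j, (a j : ℝ) * s j + ∑ j, (a j : ℝ) * (s j * r j))
    (∑ j, (a j : ℝ) * (s j * r j))
  rw [add_sub_cancel_right] at htri
  rw [hsplit]
  linarith

lemma rpow_inv_one_add_sum_le (hq : 0 < q) {D : ℝ} {b r : Fin n → ℝ} (hb : ∀ j, 0 ≤ b j)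
    (h : 1 ≤ |D| + ∑ j, b j * |r j|) :
    (1 + ∑ j, b j)⁻¹ ^ q ≤ |D| ^ q + ∑ j, |r j| ^ q := by
  set η := (1 + ∑ j, b j)⁻¹
  have hB : 0 ≤ ∑ j, b j := Finset.sum_nonneg fun j _ => hb j
  have hη : 0 < η := inv_pos.2 (by linarith)
  have hterm : ∀ j ∈ Finset.univ, 0 ≤ |r j| ^ q := fun j _ => rpow_nonneg (abs_nonneg _) q
  have hD0 := rpow_nonneg (abs_nonneg D) q
  by_contra! hlt
  have hD : |D| < η := (rpow_lt_rpow_iff (abs_nonneg _) hη.le hq).1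
    (by linarith [Finset.sum_nonneg hterm])
  have hr : ∑ j, b j * |r j| ≤ (∑ j, b j) * η := by
    rw [Finset.sum_mul]
    refine Finset.sum_le_sum fun j _ => mul_le_mul_of_nonneg_left ?_ (hb j)
    have hj : |r j| ^ q ≤ ∑ i, |r i| ^ q := Finset.single_le_sum hterm (Finset.mem_univ j)
    exact ((rpow_lt_rpow_iff (abs_nonneg _) hη.le hq).1 (by linarith)).le
  have hone : η + (∑ j, b j) * η = 1 := by
    rw [← one_add_mul]; exact mul_inv_cancel₀ (by linarith : 0 < 1 + ∑ j, b j).ne'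
  linarith

lemma exists_pos_add_le_Ppart_zero (hq : 1 ≤ q)
    (hno : ∀ S : Finset (Fin n), ∑ i ∈ S, a i ≠ ∑ i ∈ Sᶜ, a i) :
    ∃ ε > 0, ∀ x y : Fin n → ℝ, n / 2 + ε ≤ Ppart n 0 q a x y := by
  classical
  set η := (1 + ∑ j, |(a j : ℝ)|)⁻¹
  have hη : 0 < η := inv_pos.2 (by positivity)
  refine ⟨min (1 / 2) (η ^ q), lt_min (by norm_num) (rpow_pos_of_pos hη q), fun x y => ?_⟩
  rw [Ppart_eq_add_sum_pairCost]
  have hD := rpow_nonneg (abs_nonneg (∑ j, (a j : ℝ) * (x j - y j))) q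
  by_cases hdeg : ∃ j, (x j = 0 ↔ y j = 0)
  · obtain ⟨j, hj⟩ := hdeg
    have := mul_add_le_sum (θ := fun i => pairCost 0 q (x i) (y i)) (δ := 1 / 2)
      (fun i => half_le_pairCost_zero (x i) (y i)) (j := j)
      (by linarith [one_le_pairCost_zero_of_iff (q := q) hj])
    linarith [min_le_left (1 / 2) (η ^ q)]
  · have hxor : ∀ j, ¬(x j = 0 ↔ y j = 0) := not_exists.1 hdeg
    set S : Finset (Fin n) := Finset.univ.filter fun j => x j ≠ 0
    have hdiff : ∀ j, x j - y j = (if j ∈ S then 1 else -1) * (1 + (x j + y j - 1)) := by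
      intro j
      by_cases hx : x j = 0
      · simp [S, hx]
      · have := hxor j
        simp [S, hx, show y j = 0 by tauto]
    have hcost : ∑ j, pairCost 0 q (x j) (y j) = ∑ j, |x j + y j - 1| ^ q + n / 2 := by
      simp only [pairCost_zero_of_not_iff (hxor _), Finset.sum_add_distrib, Finset.sum_const,
        Finset.card_univ, Fintype.card_fin, nsmul_eq_mul]
      ring
    have hgap := rpow_inv_one_add_sum_le (q := q) (by linarith)
      (fun j => abs_nonneg (a j : ℝ)) (one_le_abs_sum_add_sum (hno S) fun j => x j + y j - 1)
    simp only [hdiff, hcost]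
    linarith [min_le_right (1 / 2) (η ^ q)]

end zeroExponent

/-- The set `{a_1, …, a_n}` admits an equitable partition iff the infimum of the
reduction objective `P` over `ℝ^n × ℝ^n` equals `n·c(p,q)`, where `c(p,q)` is the
minimum of `g(z) = |1 − z|^q + (1/2)|z|^p` over ℝ; moreover, when such a
partition exists the infimum is attained. -/
theorem stmt_10 (n : ℕ) (p q c : ℝ) (hp0 : 0 ≤ p) (hp1 : p < 1) (hq : 1 ≤ q)
    (a : Fin n → ℤ)
    (hc : IsLeast (Set.range fun z : ℝ => |1 - z| ^ q + (1 / 2) * absPow p z) c) :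
    ((∃ S : Finset (Fin n), ∑ i ∈ S, a i = ∑ i ∈ Sᶜ, a i) ↔
      sInf (Set.range fun xy : (Fin n → ℝ) × (Fin n → ℝ) =>
        Ppart n p q a xy.1 xy.2) = (n : ℝ) * c) ∧
    ((∃ S : Finset (Fin n), ∑ i ∈ S, a i = ∑ i ∈ Sᶜ, a i) →
      ∃ x y : Fin n → ℝ, Ppart n p q a x y = (n : ℝ) * c) := by
  change IsLeast (range (scalarObj p q)) c at hc
  have hlb : ∀ w : (Fin n → ℝ) × (Fin n → ℝ), n * c ≤ Ppart n p q a w.1 w.2 :=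
    fun w => mul_le_Ppart hp0 hp1.le hc w.1 w.2
  have hattained : (∃ S : Finset (Fin n), ∑ i ∈ S, a i = ∑ i ∈ Sᶜ, a i) →
      ∃ x y : Fin n → ℝ, Ppart n p q a x y = n * c := by
    rintro ⟨S, hS⟩
    obtain ⟨z₀, hz₀⟩ := hc.1
    exact ⟨_, _, hz₀ ▸ Ppart_ite_of_partition (by linarith) hS z₀⟩
  refine ⟨⟨fun hS => ?_, fun hinf => ?_⟩, hattained⟩
  · obtain ⟨x, y, hxy⟩ := hattained hS
    exact IsLeast.csInf_eq ⟨⟨(x, y), hxy⟩, by rintro _ ⟨w, rfl⟩; exact hlb w⟩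
  rcases hp0.eq_or_lt with rfl | hp
  · by_contra! hno
    obtain ⟨ε, hε, hgap⟩ := exists_pos_add_le_Ppart_zero hq hno
    have : n / 2 + ε ≤ n * c :=
      hinf ▸ le_csInf (range_nonempty _) (by rintro _ ⟨w, rfl⟩; exact hgap w.1 w.2)
    rw [eq_half_of_isLeast_scalarObj_zero hq hc] at this
    linarith
  · obtain ⟨w, hw⟩ := exists_forall_Ppart_le (a := a) hp (by linarith : 0 ≤ q)
    refine exists_partition_of_Ppart_eq hp hp1 hq hc (le_antisymm ?_ (hlb w))
    exact hinf ▸ le_csInf (range_nonempty _) (by rintro _ ⟨v, rfl⟩; exact hw v)
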